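/- arXiv:1309.0259 — 2 statements merged into one kernel-verified Lean document; each statement's English description precedes it below -/
import Mathlib

section
/- Let G be a simple graph on n vertices. If for every integer k with 0 ≤ k ≤ (n−2)/2 the number of vertices of degree at most k is at most k, then G has a hamilton path. -/
/-!
Add a vertex adjacent to everything: a Hamiltonian cycle of the cone over `G` becomes a
Hamiltonian path of `G` once the apex is removed, and the degree hypothesis on `G` turns into
Pósa's condition on the cone. Pósa's theorem is proved by the closure argument: in an
edge-maximal counterexample `H`, any two non-adjacent vertices `u, v` are joined by a
Hamiltonian path, and Ore's rotation shows `deg u + deg v < n`; choosing `u, v` with `deg u + deg v`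
maximal and `deg u ≤ deg v`, all `n - 1 - deg v ≥ deg u` non-neighbours of `v` have degree at
most `deg u`, contradicting Pósa's condition at `k = deg u`.
-/

open Finset

namespace SimpleGraph

variable {V : Type*} {G : SimpleGraph V}

lemma countP_adj_eq_degree [Fintype V] [DecidableEq V] [DecidableRel G.Adj] {v : V}
    {l : List V} (hl : l.Nodup) (hN : ∀ w, G.Adj v w → w ∈ l) :
    l.countP (G.Adj v ·) = G.degree v := by
  rw [List.countP_eq_length_filter, ← List.toFinset_card_of_nodup (hl.filter _), degree]
  congr 1
  ext w
  simpa using fun h => hN w h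

namespace Walk

lemma exists_eq_append_cons_of_mem_darts {u v : V} {p : G.Walk u v} {d : G.Dart}
    (hd : d ∈ p.darts) :
    ∃ (q : G.Walk u d.fst) (r : G.Walk d.snd v), p = q.append (cons d.adj r) := by
  induction p with
  | nil => simp at hd
  | cons h p ih =>
    rcases List.mem_cons.mp hd with rfl | hd
    · exact ⟨nil, p, rfl⟩
    · obtain ⟨q, r, rfl⟩ := ih hd
      exact ⟨cons h q, r, rfl⟩

variable [DecidableEq V]

lemma IsHamiltonian.of_support_perm {u v x y : V} {p : G.Walk u v} {q : G.Walk x y}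
    (hp : p.IsHamiltonian) (h : q.support.Perm p.support) : q.IsHamiltonian :=
  fun w => h.count_eq w ▸ hp w

lemma IsHamiltonian.reverse {u v : V} {p : G.Walk u v} (hp : p.IsHamiltonian) :
    p.reverse.IsHamiltonian :=
  hp.of_support_perm (by rw [support_reverse]; exact List.reverse_perm _)

lemma IsHamiltonian.isHamiltonianCycle_cons [Fintype V] {u v : V} {p : G.Walk u v}
    (hp : p.IsHamiltonian) (h : G.Adj v u) (hV : 3 ≤ Fintype.card V) :
    (cons h p).IsHamiltonianCycle := by
  refine isHamiltonianCycle_iff_isCycle_and_length_eq.mpr ⟨?_, ?_⟩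
  · refine (cons_isCycle_iff p h).mpr ⟨hp.isPath, fun he => ?_⟩
    have := hp.isPath.length_eq_one_of_mem_edges (Sym2.eq_swap ▸ he)
    have := hp.length_eq
    omega
  · have := hp.length_eq
    rw [length_cons]
    omega

lemma IsHamiltonianCycle.exists_isHamiltonian_of_mem_darts {w : V} {c : G.Walk w w}
    (hc : c.IsHamiltonianCycle) {d : G.Dart} (hd : d ∈ c.darts) :
    ∃ p : G.Walk d.snd d.fst, p.IsHamiltonian ∧ d.edge ∉ p.edges := by
  obtain ⟨q, r, rfl⟩ := exists_eq_append_cons_of_mem_darts hd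
  refine ⟨r.append q, hc.isHamiltonian_tail.of_support_perm ?_, ?_⟩
  · rw [support_tail_of_not_nil _ hc.not_nil, support_append, support_append, support_cons,
      List.tail_cons, ← cons_tail_support q, List.cons_append, List.tail_cons]
    exact List.perm_append_comm
  · have hnd := hc.isCycle.edges_nodup
    rw [edges_append, edges_cons, List.nodup_middle, List.nodup_cons] at hnd
    rw [edges_append, List.mem_append, or_comm, ← List.mem_append]
    exact hnd.1

variable [Fintype V] [DecidableRel G.Adj] {u v : V} {p : G.Walk u v}

lemma IsHamiltonian.countP_darts_adj_snd (hp : p.IsHamiltonian) :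
    p.darts.countP (G.Adj u ·.snd) = G.degree u := by
  have := List.countP_map (p := (G.Adj u ·)) (f := (·.snd)) (l := p.darts)
  rw [map_snd_darts] at this
  rw [← countP_adj_eq_degree hp.isPath.support_nodup.tail, this]
  · rfl
  intro w hw
  have := hp.mem_support w
  rw [← cons_tail_support, List.mem_cons] at this
  exact this.resolve_left hw.ne'

lemma IsHamiltonian.countP_darts_adj_fst (hp : p.IsHamiltonian) :
    p.darts.countP (G.Adj v ·.fst) = G.degree v := by
  rw [← hp.reverse.countP_darts_adj_snd, darts_reverse, List.countP_reverse, List.countP_map]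
  rfl

/-- Of the `n - 1` darts of `p`, `deg u` end at a neighbour of `u` and `deg v` start at a
neighbour of `v`. -/
lemma IsHamiltonian.exists_mem_darts_adj_snd_adj_fst (hp : p.IsHamiltonian)
    (hdeg : Fintype.card V ≤ G.degree u + G.degree v) :
    ∃ d ∈ p.darts, G.Adj u d.snd ∧ G.Adj v d.fst := by
  by_contra! h
  have hle : p.darts.countP (G.Adj v ·.fst) ≤ p.darts.countP (fun d => ¬G.Adj u d.snd) :=
    List.countP_mono_left fun d hd hv => by simpa using fun hu => h d hd hu (by simpa using hv)
  have hlen := List.length_eq_countP_add_countP (G.Adj u ·.snd) (l := p.darts)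
  rw [hp.countP_darts_adj_snd, length_darts, hp.length_eq] at hlen
  rw [hp.countP_darts_adj_fst] at hle
  have : 0 < Fintype.card V := Fintype.card_pos_iff.mpr ⟨u⟩
  simp only [decide_eq_true_eq, decide_not] at hlen hle
  omega

/-- Ore's rotation: if `p = u ⋯ x y ⋯ v` with `u ~ y` and `v ~ x`, then
`u ⋯ x v ⋯ y u` is a Hamiltonian cycle. -/
lemma IsHamiltonian.isHamiltonian_of_card_le_degree_add_degree (hp : p.IsHamiltonian)
    (hV : 3 ≤ Fintype.card V) (hdeg : Fintype.card V ≤ G.degree u + G.degree v) :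
    G.IsHamiltonian := by
  obtain ⟨d, hd, hu, hv⟩ := hp.exists_mem_darts_adj_snd_adj_fst hdeg
  obtain ⟨q, r, rfl⟩ := exists_eq_append_cons_of_mem_darts hd
  refine fun _ => ⟨u, cons hu (r.append (cons hv q.reverse)), ?_⟩
  refine IsHamiltonian.isHamiltonianCycle_cons (hp.of_support_perm ?_) _ hV
  simp only [support_append, support_cons, List.tail_cons, support_reverse]
  exact List.perm_append_comm.trans ((List.reverse_perm _).append_right _)

end Walk

open Walk

lemma mem_edgeSet_of_mem_edgeSet_sup_edge {u v : V} {e : Sym2 V}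
    (he : e ∈ (G ⊔ edge u v).edgeSet) (hne : e ≠ s(u, v)) : e ∈ G.edgeSet := by
  rw [edgeSet_sup] at he
  exact he.resolve_right fun h => hne (edgeSet_edge_subset h)

lemma isHamiltonian_or_exists_isHamiltonian_of_isHamiltonian_sup_edge [Fintype V]
    [DecidableEq V] {u v : V} (huv : u ≠ v) (hV : Fintype.card V ≠ 1)
    (h : (G ⊔ edge u v).IsHamiltonian) :
    G.IsHamiltonian ∨ ∃ p : G.Walk u v, p.IsHamiltonian := by
  obtain ⟨w, c, hc⟩ := h hV
  by_cases hcuv : s(u, v) ∈ c.edges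
  · right
    obtain ⟨d, hd, hduv⟩ := List.mem_map.mp hcuv
    obtain ⟨p, hp, hpd⟩ := hc.exists_isHamiltonian_of_mem_darts hd
    have hpG : ∀ e ∈ p.edges, e ∈ G.edgeSet := fun e he =>
      mem_edgeSet_of_mem_edgeSet_sup_edge (p.edges_subset_edgeSet he)
        (by rintro rfl; exact hpd (hduv ▸ he))
    have hpG' : (p.transfer G hpG).IsHamiltonian := fun z => by
      rw [support_transfer]; exact hp z
    obtain ⟨⟨x, y⟩, hxy⟩ := d
    rw [Dart.edge_mk, Sym2.eq_iff] at hduv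
    rcases hduv with ⟨rfl, rfl⟩ | ⟨rfl, rfl⟩
    · exact ⟨_, hpG'.reverse⟩
    · exact ⟨_, hpG'⟩
  · left
    have hcG : ∀ e ∈ c.edges, e ∈ G.edgeSet := fun e he =>
      mem_edgeSet_of_mem_edgeSet_sup_edge (c.edges_subset_edgeSet he)
        (by rintro rfl; exact hcuv he)
    refine fun _ => ⟨w, c.transfer G hcG, isHamiltonianCycle_iff_isCycle_and_length_eq.mpr
      ⟨hc.isCycle.transfer hcG, ?_⟩⟩
    rw [length_transfer, hc.length_eq]

lemma isHamiltonian_top [Fintype V] [DecidableEq V] (hV : 3 ≤ Fintype.card V) :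
    (⊤ : SimpleGraph V).IsHamiltonian := by
  intro _
  obtain ⟨a, p, hp, hlen⟩ := (cycleGraph_isContained_iff hV).mp
    (isContained_top_iff.mpr ⟨(Fintype.equivFin V).symm.toEmbedding⟩)
  exact ⟨a, p, isHamiltonianCycle_iff_isCycle_and_length_eq.mpr ⟨hp, hlen⟩⟩

/-- Pósa's degree condition, in the form that is strict also at `k = (n - 1) / 2`. -/
def PosaCondition [Fintype V] (G : SimpleGraph V) [DecidableRel G.Adj] : Prop :=
  ∀ k, 0 < k → 2 * k < Fintype.card V → #{v | G.degree v ≤ k} < k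

lemma PosaCondition.mono [Fintype V] {H : SimpleGraph V} [DecidableRel G.Adj]
    [DecidableRel H.Adj] (hGH : G ≤ H) (hG : G.PosaCondition) : H.PosaCondition :=
  fun k hk hkV =>
  calc #{v | H.degree v ≤ k} ≤ #{v | G.degree v ≤ k} :=
        card_le_card fun v => by
          simpa only [mem_filter, mem_univ, true_and] using (degree_le_of_le hGH).trans
    _ < k := hG k hk hkV

lemma PosaCondition.card_le_degree_add_degree [Fintype V] [DecidableRel G.Adj]
    (hG : G.PosaCondition) (hV : 3 ≤ Fintype.card V) {u v : V} (huv : Gᶜ.Adj u v)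
    (hmax : ∀ x y, Gᶜ.Adj x y → G.degree x + G.degree y ≤ G.degree u + G.degree v) :
    Fintype.card V ≤ G.degree u + G.degree v := by
  classical
  wlog hle : G.degree u ≤ G.degree v generalizing u v
  · have := this huv.symm (fun x y hxy => (hmax x y hxy).trans_eq (add_comm _ _)) (by omega)
    omega
  have hu : 1 < G.degree u := by
    have := hG 1 one_pos (by omega)
    rw [Nat.lt_one_iff, card_eq_zero, filter_eq_empty_iff] at this
    simpa using this (mem_univ u)
  by_contra! hlt
  have hsub : Gᶜ.neighborFinset v ⊆ ({w | G.degree w ≤ G.degree u} : Finset V) := fun w hw => by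
    have := hmax w v ((mem_neighborFinset _ _ _).mp hw).symm
    simp only [mem_filter, mem_univ, true_and]
    omega
  have hcard := card_le_card hsub
  rw [card_neighborFinset_eq_degree, degree_compl] at hcard
  have := hG (G.degree u) (by omega) (by omega)
  omega

theorem PosaCondition.isHamiltonian [Fintype V] [DecidableEq V] [DecidableRel G.Adj]
    (hG : G.PosaCondition) (hV : 3 ≤ Fintype.card V) : G.IsHamiltonian := by
  revert ‹DecidableRel G.Adj›
  induction G using WellFoundedGT.induction with
  | _ G ih =>
  intro _ hG
  rcases eq_or_ne G ⊤ with rfl | hGtop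
  · exact isHamiltonian_top hV
  have : Nonempty Gᶜ.Dart := by
    obtain ⟨u, v, huv, hnadj⟩ := ne_top_iff_exists_not_adj.mp hGtop
    exact ⟨⟨(u, v), (compl_adj G u v).mpr ⟨huv, hnadj⟩⟩⟩
  obtain ⟨⟨⟨u, v⟩, huv⟩, hmax⟩ :=
    Finite.exists_max fun d : Gᶜ.Dart => G.degree d.fst + G.degree d.snd
  have hlt := lt_sup_edge G u v huv.ne ((compl_adj G u v).mp huv).2
  rcases isHamiltonian_or_exists_isHamiltonian_of_isHamiltonian_sup_edge huv.ne (by omega)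
    (ih _ hlt (hG.mono hlt.le)) with hGham | ⟨p, hp⟩
  · exact hGham
  · exact hp.isHamiltonian_of_card_le_degree_add_degree hV <|
      hG.card_le_degree_add_degree hV huv fun x y hxy => hmax ⟨(x, y), hxy⟩

def cone (G : SimpleGraph V) : SimpleGraph (Option V) where
  Adj
    | some a, some b => G.Adj a b
    | none, some _ | some _, none => True
    | none, none => False
  symm := ⟨fun
    | some _, some _, h => h.symm
    | none, some _, _ | some _, none, _ => trivial⟩
  loopless := ⟨fun
    | some _, h => h.ne rfl
    | none, h => h⟩

@[simp] lemma cone_adj_some_some {a b : V} : G.cone.Adj (some a) (some b) ↔ G.Adj a b := Iff.rfl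
@[simp] lemma cone_adj_none_some {b : V} : G.cone.Adj none (some b) := trivial
@[simp] lemma cone_adj_some_none {a : V} : G.cone.Adj (some a) none := trivial
@[simp] lemma not_cone_adj_none_none : ¬G.cone.Adj none none := id

instance [DecidableRel G.Adj] : DecidableRel G.cone.Adj
  | some a, some b => inferInstanceAs (Decidable (G.Adj a b))
  | none, some _ | some _, none => isTrue trivial
  | none, none => isFalse id

lemma exists_walk_support_map_some_eq {x y : Option V} (r : G.cone.Walk x y)
    (hr : none ∉ r.support) :
    ∃ (a b : V) (t : G.Walk a b), x = some a ∧ y = some b ∧ t.support.map some = r.support := by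
  induction r with
  | @nil x =>
    cases x with
    | none => simp at hr
    | some a => exact ⟨a, a, .nil, rfl, rfl, rfl⟩
  | @cons x z y h r ih =>
    rw [support_cons, List.mem_cons, not_or] at hr
    obtain ⟨b, c, t, rfl, rfl, ht⟩ := ih hr.2
    cases x with
    | none => exact absurd rfl hr.1
    | some a =>
      exact ⟨a, c, .cons (cone_adj_some_some.mp h) t, rfl, rfl,
        by rw [support_cons, support_cons, List.map_cons, ht]⟩

lemma exists_isHamiltonian_of_isHamiltonian_cone [Fintype V] [DecidableEq V] [Nonempty V]
    (h : G.cone.IsHamiltonian) : ∃ (a b : V) (t : G.Walk a b), t.IsHamiltonian := by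
  obtain ⟨c, hc⟩ := h.exists_isHamiltonianCycle none
  have hp := hc.isHamiltonian_tail
  have hnil : ¬c.tail.Nil := by
    rw [← length_eq_zero_iff, hp.length_eq, Fintype.card_option]
    exact Fintype.card_ne_zero
  have hcount (z : Option V) : c.tail.dropLast.support.count z + [none].count z = 1 := by
    rw [support_dropLast hnil, ← List.count_append, dropLast_support_concat]
    convert hp z
  obtain ⟨a, b, t, -, -, ht⟩ := exists_walk_support_map_some_eq c.tail.dropLast
    (List.count_eq_zero.mp (by simpa using hcount none))
  refine ⟨a, b, t, fun v => ?_⟩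
  rw [← List.count_map_of_injective _ _ (Option.some_injective V), ht]
  simpa using hcount (some v)

variable [Fintype V] [DecidableRel G.Adj]

lemma degree_cone_none : G.cone.degree none = Fintype.card V := by
  have : G.cone.neighborFinset none = univ.map .some := by
    ext x; cases x <;> simp
  rw [← card_neighborFinset_eq_degree, this, card_map, card_univ]

lemma degree_cone_some (v : V) : G.cone.degree (some v) = G.degree v + 1 := by
  have : G.cone.neighborFinset (some v) = (G.neighborFinset v).insertNone := by
    ext x; cases x <;> simp
  rw [← card_neighborFinset_eq_degree, this, card_insertNone, card_neighborFinset_eq_degree]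

lemma posaCondition_cone (h : ∀ k, 2 * k ≤ Fintype.card V - 2 → #{v | G.degree v ≤ k} ≤ k) :
    G.cone.PosaCondition := by
  intro k hk hkV
  rw [Fintype.card_option] at hkV
  calc #{x | G.cone.degree x ≤ k} ≤ #(({v | G.degree v ≤ k - 1} : Finset V).map .some) := by
        refine card_le_card fun x hx => ?_
        cases x <;> simp_all [degree_cone_none, degree_cone_some] <;> omega
    _ < k := by
        rw [card_map]
        have := h (k - 1) (by omega)
        omega

end SimpleGraph

open SimpleGraph

theorem posa_hamiltonian_path {V : Type*} [Fintype V] [DecidableEq V] [Nonempty V]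
    (G : SimpleGraph V) [DecidableRel G.Adj] (n : ℕ) (hn : Fintype.card V = n)
    (h : ∀ k : ℕ, 2 * k ≤ n - 2 →
      (Finset.univ.filter fun v => G.degree v ≤ k).card ≤ k) :
    ∃ (u v : V) (p : G.Walk u v), p.IsHamiltonian := by
  subst hn
  obtain hV | hV : Fintype.card V = 1 ∨ 2 ≤ Fintype.card V := by
    have := Fintype.card_pos (α := V)
    omega
  · obtain ⟨v⟩ := ‹Nonempty V›
    have := Fintype.card_le_one_iff_subsingleton.mp hV.le
    exact ⟨v, v, .nil, .of_subsingleton⟩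
  · refine exists_isHamiltonian_of_isHamiltonian_cone ((posaCondition_cone h).isHamiltonian ?_)
    rw [Fintype.card_option]
    omega
end

section
/- For any finite simple graph G, λ(G) ≤ |V(G)| + χ(G) − 2, where χ(G) is the chromatic number. -/
open SimpleGraph

/-- An `L(2,1)`-labeling of `G`: adjacent vertices get labels differing by at least 2,
vertices at distance 2 get labels differing by at least 1. -/
def IsL21 {V : Type*} (G : SimpleGraph V) (f : V → ℤ) : Prop :=
  (∀ x y, G.Adj x y → 2 ≤ |f x - f y|) ∧ (∀ x y, G.dist x y = 2 → 1 ≤ |f x - f y|)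

/-- The span of a labeling: the largest label minus the smallest label. -/
def labelSpan {V : Type*} [Fintype V] (f : V → ℤ) : ℕ :=
  Finset.univ.sup fun p : V × V => (f p.1 - f p.2).toNat

/-- `λ(G)`: the minimum span over all `L(2,1)`-labelings of `G`. -/
noncomputable def lambda21 {V : Type*} [Fintype V] (G : SimpleGraph V) : ℕ :=
  sInf {s | ∃ f : V → ℤ, IsL21 G f ∧ labelSpan f = s}

/-!
Fix a proper colouring `c` with `k = χ(G)` colours and list the `n` vertices colour class by
colour class, giving the `i`-th vertex `v` of the list the label `i + c(v)`. Labels strictly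
increase along the list, so distinct vertices get distinct labels; between two adjacent vertices
the colour also increases, so their labels differ by at least `2`. All labels lie in
`[0, (n - 1) + (k - 1)]`.
-/

theorem exists_equivFin_lt_imp_le {V β : Type*} [Fintype V] [LinearOrder β] (c : V → β) :
    ∃ e : V ≃ Fin (Fintype.card V), ∀ x y, e x < e y → c x ≤ c y := by
  let ι := Fintype.equivFin V
  let key : V → β ×ₗ Fin (Fintype.card V) := fun v => toLex (c v, ι v)
  have key_injective : Function.Injective key := fun x y h =>
    ι.injective (congrArg (fun p => (ofLex p).2) h)
  let : LinearOrder V := LinearOrder.lift' key key_injective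
  let e := (Fintype.orderIsoFinOfCardEq V rfl).symm
  refine ⟨e.toEquiv, fun x y hxy => ?_⟩
  have : key x < key y := e.lt_iff_lt.mp hxy
  exact Prod.Lex.monotone_fst _ _ this.le

theorem isL21_add {V : Type*} {G : SimpleGraph V} {r c : V → ℤ} (hr : Function.Injective r)
    (hrc : ∀ x y, r x < r y → c x ≤ c y) (hc : ∀ x y, G.Adj x y → c x ≠ c y) :
    IsL21 G (r + c) := by
  have separated : ∀ x y, x ≠ y →
      (G.Adj x y → 2 ≤ |(r + c) x - (r + c) y|) ∧ 1 ≤ |(r + c) x - (r + c) y| := by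
    intro x y hne
    simp only [Pi.add_apply, le_abs]
    rcases (hr.ne hne).lt_or_gt with hxy | hyx
    · have := hrc x y hxy
      exact ⟨fun hadj => by have := hc x y hadj; omega, by omega⟩
    · have := hrc y x hyx
      exact ⟨fun hadj => by have := hc y x hadj.symm; omega, by omega⟩
  refine ⟨fun x y hadj => (separated x y hadj.ne).1 hadj, fun x y hdist => (separated x y ?_).2⟩
  rintro rfl
  simp at hdist

theorem labelSpan_le {V : Type*} [Fintype V] {f : V → ℤ} {m : ℕ}
    (h : ∀ x y, f x - f y ≤ m) : labelSpan f ≤ m :=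
  Finset.sup_le fun p _ => by have := h p.1 p.2; omega

theorem lambda21_le_labelSpan {V : Type*} [Fintype V] {G : SimpleGraph V} {f : V → ℤ}
    (hf : IsL21 G f) : lambda21 G ≤ labelSpan f :=
  Nat.sInf_le ⟨f, hf, rfl⟩

theorem lambda21_le_card_add_of_coloring {V : Type*} [Fintype V] {G : SimpleGraph V} {k : ℕ}
    (C : G.Coloring (Fin k)) : lambda21 G ≤ Fintype.card V + k - 2 := by
  obtain ⟨e, he⟩ := exists_equivFin_lt_imp_le C
  let r : V → ℤ := fun v => (e v : ℕ)
  let c : V → ℤ := fun v => (C v : ℕ)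
  have hL21 : IsL21 G (r + c) := by
    refine isL21_add (fun x y h => e.injective (Fin.ext (by simpa [r] using h))) ?_ ?_
    · intro x y hxy
      simpa [c] using he x y (by simpa [r] using hxy)
    · intro x y hadj h
      exact C.valid hadj (Fin.ext (by simpa [c] using h))
  refine (lambda21_le_labelSpan hL21).trans (labelSpan_le fun x y => ?_)
  have hr := (e x).isLt
  have hc := (C x).isLt
  simp only [Pi.add_apply, r, c]
  push_cast [Nat.cast_sub (by omega : 2 ≤ Fintype.card V + k)]
  omega

theorem lambda21_le_card_add_chromaticNumber {V : Type*} [Fintype V] (G : SimpleGraph V) :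
    (lambda21 G : ℕ∞) ≤ (Fintype.card V : ℕ∞) + G.chromaticNumber - 2 := by
  obtain ⟨C⟩ := G.colorable_chromaticNumber_of_fintype
  have hχ : (G.chromaticNumber.toNat : ℕ∞) = G.chromaticNumber :=
    ENat.natCast_toNat (chromaticNumber_ne_top_iff_exists.mpr ⟨_, G.colorable_of_fintype⟩)
  calc (lambda21 G : ℕ∞)
      ≤ ((Fintype.card V + G.chromaticNumber.toNat - 2 : ℕ) : ℕ∞) := by
        exact_mod_cast lambda21_le_card_add_of_coloring C
    _ = (Fintype.card V : ℕ∞) + G.chromaticNumber - 2 := by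
        rw [ENat.natCast_sub, Nat.cast_add, hχ]
        rfl
end
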